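/- arXiv:1904.08882 — 2 statements merged into one kernel-verified Lean document; each statement's English description precedes it below -/
import Mathlib

section
/- Let p be a prime, H > 0, and let X = (X_n)_{n∈ℕ₀} be a dt-ss-si process with scaling function b(n) = (|n|_p)^H. Then X₁ and −X₁ have the same distribution. Consequently, if E|X₁| < ∞, then E(X_n) = 0 for all n ∈ ℕ₀. -/
open MeasureTheory ProbabilityTheory Filter

noncomputable section

/-- The `p`-adic norm of a natural number, as a real number (`0` for `n = 0`). -/
def padicNormNat (p n : ℕ) : ℝ := ((padicNorm p (n : ℚ) : ℚ) : ℝ)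

/-- Equality in distribution of two families of random variables: the laws of the
induced maps into the product space coincide. -/
def EqDistFam {ι Ω₁ Ω₂ E : Type*} [MeasurableSpace Ω₁] [MeasurableSpace Ω₂]
    [MeasurableSpace E]
    (P₁ : Measure Ω₁) (P₂ : Measure Ω₂) (X : ι → Ω₁ → E) (Y : ι → Ω₂ → E) : Prop :=
  Measure.map (fun ω i => X i ω) P₁ = Measure.map (fun ω i => Y i ω) P₂

/-- A discrete-time process is self-similar with scaling function `b` if for every `n ≥ 1`,
`(X (n*m))ₘ ≐ (b n • X m)ₘ`. -/
def SelfSimilar {Ω : Type*} [MeasurableSpace Ω] (P : Measure Ω) (X : ℕ → Ω → ℝ)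
    (b : ℕ → ℝ) : Prop :=
  ∀ n : ℕ, 1 ≤ n → EqDistFam P P (fun m ω => X (n * m) ω) (fun m ω => b n * X m ω)

/-- A discrete-time process has stationary increments if for every `k ≥ 1`,
`(X (m+1) - X m)ₘ ≐ (X (m+k+1) - X (m+k))ₘ`. -/
def StationaryIncrements {Ω : Type*} [MeasurableSpace Ω] (P : Measure Ω)
    (X : ℕ → Ω → ℝ) : Prop :=
  ∀ k : ℕ, 1 ≤ k → EqDistFam P P (fun m ω => X (m + 1) ω - X m ω)
    (fun m ω => X (m + k + 1) ω - X (m + k) ω)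

/-!
Along `n = p ^ j` the scaling factor `p ^ (-j H)` tends to `0`, so `X (p ^ j) → 0` in probability
and `X 0 = 0` almost surely. Since `p ^ j - 1` is prime to `p`, its scaling factor is `1` and
`X (p ^ j - 1) ≐ X 1`, while `X (p ^ j - 1) - X (p ^ j) ≐ -X 1` by stationarity of the
increments. Letting `j → ∞`, Slutsky's theorem gives `X 1 ≐ -X 1`. The means then vanish because
`E (X n) = n E (X 1)`.
-/

open Topology

namespace MeasureTheory

variable {ι Ω E : Type*} {mΩ : MeasurableSpace Ω} {μ : Measure Ω} {l : Filter ι}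

theorem TendstoInMeasure.of_identDistrib [PseudoEMetricSpace E] [MeasurableSpace E]
    [OpensMeasurableSpace E] {f f' : ι → Ω → E} {c : E}
    (h : TendstoInMeasure μ f l fun _ ↦ c) (hf' : ∀ i, IdentDistrib (f' i) (f i) μ μ) :
    TendstoInMeasure μ f' l fun _ ↦ c := by
  intro ε hε
  have hs : MeasurableSet {y : E | ε ≤ edist y c} :=
    (isClosed_le continuous_const (continuous_id.edist continuous_const)).measurableSet
  exact (h ε hε).congr fun i ↦ ((hf' i).measure_mem_eq hs).symm

variable [IsProbabilityMeasure μ] [NormedAddCommGroup E] [SecondCountableTopology E]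
  [MeasurableSpace E] [BorelSpace E] [l.NeBot] [l.IsCountablyGenerated]

/-- By Slutsky, `A i + B i` converges in distribution to `U`; its law is constantly that of `V`. -/
theorem IdentDistrib.of_tendstoInMeasure_add {A B : ι → Ω → E} {U V : Ω → E}
    (hA : ∀ i, IdentDistrib (A i) U μ μ) (hAB : ∀ i, IdentDistrib (A i + B i) V μ μ)
    (hB : TendstoInMeasure μ B l 0) (hBm : ∀ i, AEMeasurable (B i) μ) :
    IdentDistrib U V μ μ := by
  obtain ⟨i⟩ := l.nonempty_of_neBot
  have hconst {Y : ι → Ω → E} {Z : Ω → E} (hY : ∀ i, IdentDistrib (Y i) Z μ μ) :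
      TendstoInDistribution Y l Z (fun _ ↦ μ) μ :=
    tendstoInDistribution_of_identDistrib i (fun j ↦ (hY i).trans (hY j).symm) (hY i)
  have hAU : TendstoInDistribution (fun i ↦ A i + B i) l U (fun _ ↦ μ) μ :=
    tendstoInDistribution_of_tendstoInMeasure_sub _ U (hconst hA)
      (by convert hB using 1; ext i ω; simp) fun i ↦ (hA i).aemeasurable_fst.add (hBm i)
  exact ⟨(hA i).aemeasurable_snd, (hAB i).aemeasurable_snd,
    tendstoInDistribution_unique _ hAU (hconst hAB)⟩

end MeasureTheory

open MeasureTheory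

theorem tendstoInMeasure_const_mul_of_tendsto_zero {Ω : Type*} {mΩ : MeasurableSpace Ω}
    {μ : Measure Ω} [IsFiniteMeasure μ] {c : ℕ → ℝ} (hc : Tendsto c atTop (𝓝 0)) {Y : Ω → ℝ}
    (hY : AEStronglyMeasurable Y μ) :
    TendstoInMeasure μ (fun j ω ↦ c j * Y ω) atTop 0 :=
  tendstoInMeasure_of_tendsto_ae (fun _ ↦ hY.const_mul _)
    (ae_of_all _ fun ω ↦ by simpa using hc.mul_const (Y ω))

theorem EqDistFam.identDistrib {ι Ω₁ Ω₂ E : Type*} [MeasurableSpace Ω₁] [MeasurableSpace Ω₂]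
    [MeasurableSpace E] {P₁ : Measure Ω₁} {P₂ : Measure Ω₂} {X : ι → Ω₁ → E}
    {Y : ι → Ω₂ → E} (h : EqDistFam P₁ P₂ X Y) (hX : ∀ i, Measurable (X i))
    (hY : ∀ i, Measurable (Y i)) (i : ι) : IdentDistrib (X i) (Y i) P₁ P₂ where
  aemeasurable_fst := (hX i).aemeasurable
  aemeasurable_snd := (hY i).aemeasurable
  map_eq := by
    have h_i := congrArg (Measure.map fun f : ι → E ↦ f i) h
    rwa [Measure.map_map (measurable_pi_apply i) (measurable_pi_lambda _ hX),
      Measure.map_map (measurable_pi_apply i) (measurable_pi_lambda _ hY)] at h_i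

section

variable {Ω : Type*} [MeasurableSpace Ω] {P : Measure Ω} {X : ℕ → Ω → ℝ}

theorem SelfSimilar.identDistrib {b : ℕ → ℝ} (hss : SelfSimilar P X b)
    (hX : ∀ n, Measurable (X n)) {n : ℕ} (hn : 1 ≤ n) (m : ℕ) :
    IdentDistrib (X (n * m)) (fun ω ↦ b n * X m ω) P P :=
  (hss n hn).identDistrib (fun _ ↦ hX _) (fun _ ↦ (hX _).const_mul _) m

theorem SelfSimilar.ae_eq_zero_of_tendsto_scaling [IsProbabilityMeasure P] {b : ℕ → ℝ}
    (hss : SelfSimilar P X b) (hX : ∀ n, Measurable (X n)) {N : ℕ → ℕ} (hN : ∀ j, 1 ≤ N j)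
    (hb : Tendsto (fun j ↦ b (N j)) atTop (𝓝 0)) : X 0 =ᵐ[P] 0 := by
  have h_law : IdentDistrib (fun _ ↦ (0 : ℝ)) (X 0) P P :=
    IdentDistrib.of_tendstoInMeasure_add (A := fun _ _ ↦ 0) (fun _ ↦ .refl aemeasurable_const)
      (fun j ↦ by simpa [Pi.add_def] using (hss.identDistrib hX (hN j) 0).symm)
      (tendstoInMeasure_const_mul_of_tendsto_zero hb (hX 0).aestronglyMeasurable)
      (fun _ ↦ ((hX 0).const_mul _).aemeasurable)
  exact h_law.ae_snd (measurableSet_singleton 0) (ae_of_all _ fun _ ↦ rfl)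

theorem StationaryIncrements.identDistrib_increment (hsi : StationaryIncrements P X)
    (hX : ∀ n, Measurable (X n)) (h0 : X 0 =ᵐ[P] 0) (k : ℕ) :
    IdentDistrib (fun ω ↦ X (k + 1) ω - X k ω) (X 1) P P := by
  have h_first : IdentDistrib (fun ω ↦ X 1 ω - X 0 ω) (X 1) P P :=
    .of_ae_eq ((hX 1).sub (hX 0)).aemeasurable (h0.mono fun ω h ↦ by simp [h])
  rcases Nat.eq_zero_or_pos k with rfl | hk
  · exact h_first
  · have h_shift := (hsi k hk).identDistrib (fun _ ↦ (hX _).sub (hX _))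
      (fun _ ↦ (hX _).sub (hX _)) 0
    simp only [zero_add] at h_shift
    exact h_shift.symm.trans h_first

theorem integrable_and_integral_eq_of_identDistrib_increments (h0 : X 0 =ᵐ[P] 0)
    (hinc : ∀ k, IdentDistrib (fun ω ↦ X (k + 1) ω - X k ω) (X 1) P P)
    (hint : Integrable (X 1) P) (n : ℕ) :
    Integrable (X n) P ∧ ∫ ω, X n ω ∂P = n * ∫ ω, X 1 ω ∂P := by
  induction n with
  | zero => exact ⟨(integrable_zero _ _ _).congr h0.symm, by simp [integral_congr_ae h0]⟩
  | succ k ih =>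
    have h_int := (hinc k).integrable_iff.mpr hint
    have h_split : X (k + 1) = fun ω ↦ X k ω + (X (k + 1) ω - X k ω) := by
      funext ω; ring
    rw [h_split, integral_add ih.1 h_int, ih.2, (hinc k).integral_eq]
    exact ⟨ih.1.add h_int, by push_cast; ring⟩

end

theorem padicNormNat_pow_self {p : ℕ} (hp : p.Prime) (j : ℕ) :
    padicNormNat p (p ^ j) = (p : ℝ)⁻¹ ^ j := by
  have : Fact p.Prime := ⟨hp⟩
  simp [padicNormNat, IsAbsoluteValue.abv_pow (padicNorm p), padicNorm.padicNorm_p_of_prime]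

theorem padicNormNat_eq_one {p n : ℕ} [Fact p.Prime] (h : ¬p ∣ n) : padicNormNat p n = 1 := by
  simp [padicNormNat, (padicNorm.nat_eq_one_iff n).mpr h]

theorem SelfSimilar.identDistrib_of_not_dvd {Ω : Type*} [MeasurableSpace Ω] {P : Measure Ω}
    {X : ℕ → Ω → ℝ} {p : ℕ} [Fact p.Prime] {H : ℝ}
    (hss : SelfSimilar P X fun n ↦ padicNormNat p n ^ H) (hX : ∀ n, Measurable (X n)) {n : ℕ}
    (hn : ¬p ∣ n) : IdentDistrib (X n) (X 1) P P := by
  have h_pos : 1 ≤ n := Nat.pos_of_ne_zero fun h ↦ hn (h ▸ dvd_zero p)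
  simpa [padicNormNat_eq_one hn] using hss.identDistrib hX h_pos 1

theorem tendsto_padicNormNat_pow_rpow {p : ℕ} (hp : p.Prime) {H : ℝ} (hH : 0 < H) :
    Tendsto (fun j ↦ padicNormNat p (p ^ j) ^ H) atTop (𝓝 0) := by
  simp_rw [padicNormNat_pow_self hp]
  have h_geom : Tendsto (fun j ↦ (p : ℝ)⁻¹ ^ j) atTop (𝓝 0) :=
    tendsto_pow_atTop_nhds_zero_of_lt_one (by positivity)
      (inv_lt_one_of_one_lt₀ (by exact_mod_cast hp.one_lt))
  simpa [Real.zero_rpow hH.ne'] using h_geom.rpow_const (Or.inr hH.le)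

/-- Proposition 2.6 (3): for a type-II dt-ss-si process, `X 1` is symmetric;
consequently, if `X 1` is integrable then every `X n` has zero mean. -/
theorem stmt9 {Ω : Type*} [MeasurableSpace Ω] (P : Measure Ω) [IsProbabilityMeasure P]
    (X : ℕ → Ω → ℝ) (hXmeas : ∀ n, Measurable (X n))
    (p : ℕ) (hp : p.Prime) (H : ℝ) (hH : 0 < H)
    (hss : SelfSimilar P X (fun n => (padicNormNat p n) ^ H))
    (hsi : StationaryIncrements P X) :
    IdentDistrib (X 1) (fun ω => -X 1 ω) P P ∧
    (Integrable (X 1) P → ∀ n : ℕ, ∫ ω, X n ω ∂P = 0) := by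
  have : Fact p.Prime := ⟨hp⟩
  set n : ℕ → ℕ := fun j ↦ p ^ (j + 1) - 1
  have hn : ∀ j, n j + 1 = p ^ (j + 1) := fun j ↦ Nat.sub_add_cancel (Nat.one_le_pow _ _ hp.pos)
  have hb := (tendsto_padicNormNat_pow_rpow hp hH).comp (tendsto_add_atTop_nat 1)
  have h0 : X 0 =ᵐ[P] 0 :=
    hss.ae_eq_zero_of_tendsto_scaling hXmeas (fun j ↦ (hn j).symm ▸ Nat.le_add_left 1 _) hb
  have hinc := hsi.identDistrib_increment hXmeas h0
  have h_small : TendstoInMeasure P (fun j ↦ X (n j + 1)) atTop 0 :=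
    .of_identDistrib (tendstoInMeasure_const_mul_of_tendsto_zero hb
      (hXmeas 1).aestronglyMeasurable) fun j ↦ by
        simpa [hn] using hss.identDistrib hXmeas (Nat.one_le_pow _ _ hp.pos) 1
  have h_cop (j : ℕ) : ¬p ∣ n j := fun h ↦ hp.one_lt.ne' (Nat.dvd_one.mp
    ((Nat.dvd_add_right h).mp (hn j ▸ dvd_pow_self p j.succ_ne_zero)))
  have hsym : IdentDistrib (X 1) (fun ω ↦ -X 1 ω) P P := by
    refine (IdentDistrib.of_tendstoInMeasure_add (A := fun j ω ↦ X (n j) ω - X (n j + 1) ω)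
      (fun j ↦ ?_) (fun j ↦ ?_) h_small fun _ ↦ (hXmeas _).aemeasurable).symm
    · convert (hinc (n j)).neg using 1 <;> ext ω <;> simp
    · convert hss.identDistrib_of_not_dvd hXmeas (h_cop j) using 1
      ext ω; simp
  refine ⟨hsym, fun hint k ↦ ?_⟩
  have h_mean : ∫ ω, X 1 ω ∂P = 0 := by
    have := hsym.integral_eq
    rw [integral_neg] at this
    linarith
  rw [(integrable_and_integral_eq_of_identDistrib_increments h0 hinc hint k).2, h_mean, mul_zero]
end
end

section
/- Let p be a prime, H > 0, and let X = (X_n)_{n∈ℕ₀} be a dt-ss-si process with scaling function b(n) = (|n|_p)^H. Then the distribution of X₁ has no atom except possibly at zero; that is, P(X₁ = x) = 0 for every real x ≠ 0. -/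
/-!
Suppose `a = P (X 1 = x) > 0` and put `c = p ^ (-H) < 1`. Self-similarity at `p ^ j` gives
`P (X (p ^ j) = c ^ j x) = a` for every `j`. For `j < k` both events force
`X (p ^ k) - X (p ^ j) = (c ^ k - c ^ j) x`. By stationary increments this difference has the law
of `X L - X 0` with `L = p ^ j (p ^ (k - j) - 1)`, and since `|L|_p = |p ^ j|_p`, self-similarity
turns it into `c ^ j (X 1 - X 0)`. So the two events meet with probability at most
`P (X 1 - X 0 = (c ^ (k - j) - 1) x)`; these levels are pairwise distinct, so the bound tends to
`0` as `k - j → ∞`. Bonferroni's inequality for `N` widely spaced such events then gives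
`N a ≤ 1 + o(1)`, absurd for large `N`.
-/

open MeasureTheory ProbabilityTheory Filter

noncomputable section

open scoped ENNReal Topology

lemma Nat.Prime.not_dvd_pow_sub_one {p e : ℕ} (hp : p.Prime) (he : e ≠ 0) :
    ¬ p ∣ p ^ e - 1 := fun h => by
  have := Nat.dvd_sub (dvd_pow_self p he) h
  rw [Nat.sub_sub_self (Nat.one_le_pow _ _ hp.pos)] at this
  exact hp.not_dvd_one this

section PadicNorm

variable {p : ℕ} [Fact p.Prime]

lemma padicNormNat_mul (m n : ℕ) :
    padicNormNat p (m * n) = padicNormNat p m * padicNormNat p n := by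
  simp [padicNormNat, padicNorm.mul]

lemma padicNormNat_eq_one_of_not_dvd {n : ℕ} (h : ¬ p ∣ n) : padicNormNat p n = 1 := by
  simp [padicNormNat, (padicNorm.nat_eq_one_iff n).mpr h]

lemma padicNormNat_prime_pow (d : ℕ) : padicNormNat p (p ^ d) = (p : ℝ)⁻¹ ^ d := by
  induction d with
  | zero => simp [padicNormNat]
  | succ d ih =>
    rw [pow_succ, padicNormNat_mul, ih, pow_succ]
    simp [padicNormNat, padicNorm.padicNorm_p_of_prime]

lemma padicNormNat_prime_pow_mul_rpow {u : ℕ} (hu : ¬ p ∣ u) (j : ℕ) (H : ℝ) :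
    padicNormNat p (p ^ j * u) ^ H = ((p : ℝ)⁻¹ ^ H) ^ j := by
  rw [padicNormNat_mul, padicNormNat_eq_one_of_not_dvd hu, mul_one, padicNormNat_prime_pow,
    Real.rpow_pow_comm (by positivity)]

lemma padicNormNat_prime_pow_rpow (j : ℕ) (H : ℝ) :
    padicNormNat p (p ^ j) ^ H = ((p : ℝ)⁻¹ ^ H) ^ j := by
  simpa using padicNormNat_prime_pow_mul_rpow (Fact.out : p.Prime).not_dvd_one j H

end PadicNorm

lemma EqDistFam.measure_comp_mem_eq {ι Ω₁ Ω₂ E F : Type*} [MeasurableSpace Ω₁]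
    [MeasurableSpace Ω₂] [MeasurableSpace E] [MeasurableSpace F]
    {P₁ : Measure Ω₁} {P₂ : Measure Ω₂} {U : ι → Ω₁ → E} {V : ι → Ω₂ → E}
    (h : EqDistFam P₁ P₂ U V) (hU : ∀ i, Measurable (U i)) (hV : ∀ i, Measurable (V i))
    {g : (ι → E) → F} (hg : Measurable g) {S : Set F} (hS : MeasurableSet S) :
    P₁ {ω | g (fun i => U i ω) ∈ S} = P₂ {ω | g (fun i => V i ω) ∈ S} := by
  have := congrArg (fun μ : Measure (ι → E) => μ (g ⁻¹' S)) h
  rwa [Measure.map_apply (measurable_pi_lambda _ hU) (hg hS),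
    Measure.map_apply (measurable_pi_lambda _ hV) (hg hS)] at this

section SelfSimilarity

variable {Ω : Type*} [MeasurableSpace Ω] {P : Measure Ω} {X : ℕ → Ω → ℝ}

lemma SelfSimilar.measure_eq_mul {b : ℕ → ℝ} (hss : SelfSimilar P X b)
    (hX : ∀ n, Measurable (X n)) {n : ℕ} (hn : 1 ≤ n) (hb : b n ≠ 0) (x : ℝ) :
    P {ω | X n ω = b n * x} = P {ω | X 1 ω = x} := by
  have := (hss n hn).measure_comp_mem_eq (fun m => hX _)
    (fun m => measurable_const.mul (hX m)) (measurable_pi_apply 1)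
    (measurableSet_singleton (b n * x))
  simp only [mul_one, Set.mem_singleton_iff, mul_right_inj' hb] at this
  exact this

lemma SelfSimilar.measure_sub_eq_mul {b : ℕ → ℝ} (hss : SelfSimilar P X b)
    (hX : ∀ n, Measurable (X n)) {n : ℕ} (hn : 1 ≤ n) (hb : b n ≠ 0) (y : ℝ) :
    P {ω | X n ω - X 0 ω = b n * y} = P {ω | X 1 ω - X 0 ω = y} := by
  have := (hss n hn).measure_comp_mem_eq (fun m => hX _)
    (fun m => measurable_const.mul (hX m)) (g := fun v => v 1 - v 0)
    ((measurable_pi_apply 1).sub (measurable_pi_apply 0)) (measurableSet_singleton (b n * y))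
  simp only [mul_one, mul_zero, Set.mem_singleton_iff, ← mul_sub, mul_right_inj' hb] at this
  exact this

lemma StationaryIncrements.measure_sub_eq (hsi : StationaryIncrements P X)
    (hX : ∀ n, Measurable (X n)) {k : ℕ} (hk : 1 ≤ k) (L : ℕ) (y : ℝ) :
    P {ω | X (k + L) ω - X k ω = y} = P {ω | X L ω - X 0 ω = y} := by
  have := (hsi k hk).measure_comp_mem_eq (fun m => (hX _).sub (hX m))
    (fun m => (hX _).sub (hX _)) (g := fun v => ∑ m ∈ Finset.range L, v m)
    (Finset.measurable_sum (Finset.range L) fun m _ => measurable_pi_apply m)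
    (measurableSet_singleton y)
  have htelescope : ∀ ω, ∑ m ∈ Finset.range L, (X (m + k + 1) ω - X (m + k) ω) =
      X (k + L) ω - X k ω := fun ω => by
    simpa only [add_right_comm _ k 1, zero_add, add_comm L k]
      using Finset.sum_range_sub (fun m => X (m + k) ω) L
  have htelescope₀ : ∀ ω, ∑ m ∈ Finset.range L, (X (m + 1) ω - X m ω) = X L ω - X 0 ω :=
    fun ω => Finset.sum_range_sub (fun m => X m ω) L
  simp only [htelescope₀, htelescope, Set.mem_singleton_iff] at this
  exact this.symm

lemma measure_inter_le_measure_sub_eq {b : ℕ → ℝ} (hss : SelfSimilar P X b)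
    (hsi : StationaryIncrements P X) (hX : ∀ n, Measurable (X n)) {n L : ℕ} (hn : 1 ≤ n)
    (hL : 1 ≤ L) (hbL : b L ≠ 0) (x : ℝ) :
    P ({ω | X n ω = b n * x} ∩ {ω | X (n + L) ω = b (n + L) * x}) ≤
      P {ω | X 1 ω - X 0 ω = (b (n + L) - b n) / b L * x} := by
  have hsub : {ω | X n ω = b n * x} ∩ {ω | X (n + L) ω = b (n + L) * x} ⊆
      {ω | X (n + L) ω - X n ω = b L * ((b (n + L) - b n) / b L * x)} := by
    rintro ω ⟨h₁, h₂⟩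
    simp only [Set.mem_ofPred_eq] at h₁ h₂ ⊢
    rw [h₁, h₂]
    field_simp
  calc _ ≤ _ := measure_mono hsub
    _ = _ := hsi.measure_sub_eq hX hn L _
    _ = _ := hss.measure_sub_eq_mul hX hL hbL _

lemma measure_inter_le_of_padicNormNat {p : ℕ} [Fact p.Prime] {H : ℝ}
    (hss : SelfSimilar P X (fun n => padicNormNat p n ^ H)) (hsi : StationaryIncrements P X)
    (hX : ∀ n, Measurable (X n)) (j : ℕ) {e : ℕ} (he : e ≠ 0) (x : ℝ) :
    P ({ω | X (p ^ j) ω = ((p : ℝ)⁻¹ ^ H) ^ j * x} ∩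
        {ω | X (p ^ (j + e)) ω = ((p : ℝ)⁻¹ ^ H) ^ (j + e) * x}) ≤
      P {ω | X 1 ω - X 0 ω = (((p : ℝ)⁻¹ ^ H) ^ e - 1) * x} := by
  have hp : p.Prime := Fact.out
  have hcoprime := hp.not_dvd_pow_sub_one he
  have hsplit : p ^ j + p ^ j * (p ^ e - 1) = p ^ (j + e) := by
    rw [pow_add, Nat.mul_sub, mul_one, Nat.add_sub_cancel']
    exact Nat.le_mul_of_pos_right _ (pow_pos hp.pos e)
  have hL : 1 ≤ p ^ j * (p ^ e - 1) := Nat.one_le_iff_ne_zero.mpr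
    (mul_ne_zero (pow_ne_zero _ hp.ne_zero) fun h => hcoprime (h ▸ dvd_zero p))
  have hc : ((p : ℝ)⁻¹ ^ H) ^ j ≠ 0 := by
    have : (0 : ℝ) < p := by exact_mod_cast hp.pos
    positivity
  have := measure_inter_le_measure_sub_eq hss hsi hX (Nat.one_le_pow j _ hp.pos) hL
    ((padicNormNat_prime_pow_mul_rpow hcoprime j H).symm ▸ hc) x
  have hratio : (((p : ℝ)⁻¹ ^ H) ^ (j + e) - ((p : ℝ)⁻¹ ^ H) ^ j) / ((p : ℝ)⁻¹ ^ H) ^ j =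
      ((p : ℝ)⁻¹ ^ H) ^ e - 1 := by
    rw [pow_add, ← mul_sub_one, mul_div_cancel_left₀ _ hc]
  rwa [hsplit, padicNormNat_prime_pow_rpow, padicNormNat_prime_pow_rpow,
    padicNormNat_prime_pow_mul_rpow hcoprime, hratio] at this

end SelfSimilarity

lemma tendsto_measure_eq_of_injective {Ω E : Type*} [MeasurableSpace Ω] [MeasurableSpace E]
    [MeasurableSingletonClass E] {P : Measure Ω} [IsFiniteMeasure P] {f : Ω → E}
    (hf : Measurable f) {c : ℕ → E} (hc : Function.Injective c) :
    Tendsto (fun d => P {ω | f ω = c d}) atTop (𝓝 0) := by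
  refine ENNReal.tendsto_atTop_zero_of_tsum_ne_top ?_
  rw [← measure_iUnion]
  · exact measure_ne_top P _
  · intro d e hde
    exact Set.disjoint_left.mpr fun ω h₁ h₂ => hde (hc (h₁.symm.trans h₂))
  · exact fun d => hf (measurableSet_singleton _)

section Events

variable {Ω : Type*} [MeasurableSpace Ω] (P : Measure Ω)

lemma sum_measure_le_measure_biUnion_add_sum_measure_inter {A : ℕ → Set Ω}
    (hA : ∀ i, MeasurableSet (A i)) (N : ℕ) :
    ∑ i ∈ Finset.range N, P (A i) ≤
      P (⋃ i ∈ Finset.range N, A i) +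
        ∑ i ∈ Finset.range N, ∑ j ∈ Finset.range i, P (A j ∩ A i) := by
  induction N with
  | zero => simp
  | succ N ih =>
    have hunion : ⋃ i ∈ Finset.range (N + 1), A i = (⋃ i ∈ Finset.range N, A i) ∪ A N := by
      simp [Finset.range_add_one, Set.union_comm]
    have hinter : (⋃ i ∈ Finset.range N, A i) ∩ A N = ⋃ j ∈ Finset.range N, (A j ∩ A N) := by
      simp [Set.iUnion_inter]
    have hstep : P (⋃ i ∈ Finset.range N, A i) + P (A N) ≤
        P (⋃ i ∈ Finset.range (N + 1), A i) + ∑ j ∈ Finset.range N, P (A j ∩ A N) := by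
      rw [← measure_union_add_inter _ (hA N), ← hunion, hinter]
      gcongr
      exact measure_biUnion_finset_le _ _
    rw [Finset.sum_range_succ, Finset.sum_range_succ (fun i => ∑ j ∈ Finset.range i, _)]
    calc _ ≤ P (⋃ i ∈ Finset.range N, A i) + P (A N) +
          ∑ i ∈ Finset.range N, ∑ j ∈ Finset.range i, P (A j ∩ A i) := by
          rw [add_right_comm]; gcongr
      _ ≤ _ := by rw [← add_assoc, add_right_comm _ (∑ i ∈ _, _)]; gcongr

lemma natCast_mul_le_measure_univ_add {A : ℕ → Set Ω} (hA : ∀ i, MeasurableSet (A i))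
    {a ε : ℝ≥0∞} (ha : ∀ i, a ≤ P (A i)) (hε : ∀ i k, i < k → P (A i ∩ A k) ≤ ε) (N : ℕ) :
    N * a ≤ P Set.univ + N * N * ε := by
  have hpairs : ∑ i ∈ Finset.range N, ∑ j ∈ Finset.range i, P (A j ∩ A i) ≤ N * N * ε :=
    calc _ ≤ ∑ i ∈ Finset.range N, ∑ j ∈ Finset.range i, ε := by
          gcongr with i hi j hj
          exact hε j i (Finset.mem_range.mp hj)
      _ ≤ ∑ i ∈ Finset.range N, ∑ j ∈ Finset.range N, ε :=
          Finset.sum_le_sum fun i hi => Finset.sum_le_sum_of_subset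
            (Finset.range_subset_range.mpr (Finset.mem_range.mp hi).le)
      _ = N * N * ε := by simp [mul_assoc]
  calc (N : ℝ≥0∞) * a = ∑ i ∈ Finset.range N, a := by simp
    _ ≤ ∑ i ∈ Finset.range N, P (A i) := by gcongr with i; exact ha i
    _ ≤ _ := sum_measure_le_measure_biUnion_add_sum_measure_inter P hA N
    _ ≤ _ := by gcongr; exact Set.subset_univ _

lemma eq_zero_of_measure_inter_le_of_tendsto [IsFiniteMeasure P] {A : ℕ → Set Ω}
    (hA : ∀ i, MeasurableSet (A i)) {a : ℝ≥0∞} (ha : ∀ i, a ≤ P (A i)) {T : ℕ → ℝ≥0∞}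
    (hT : Tendsto T atTop (𝓝 0)) (hAT : ∀ i k, i < k → P (A i ∩ A k) ≤ T (k - i)) :
    a = 0 := by
  by_contra ha0
  have hfin : P Set.univ + 1 ≠ ⊤ :=
    ENNReal.add_ne_top.mpr ⟨measure_ne_top P _, ENNReal.one_ne_top⟩
  obtain ⟨N, hN⟩ := ENNReal.exists_nat_gt (ENNReal.div_ne_top hfin ha0)
  have hNa : P Set.univ + 1 < N * a := (ENNReal.div_lt_iff (Or.inl ha0) (Or.inr hfin)).mp hN
  have hN0 : (N : ℝ≥0∞) * N ≠ 0 := by rintro h; simp_all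
  have hNtop : (N : ℝ≥0∞) * N ≠ ⊤ := ENNReal.mul_ne_top (by simp) (by simp)
  obtain ⟨D, hD⟩ := eventually_atTop.mp
    (hT.eventually (gt_mem_nhds (ENNReal.inv_pos.mpr hNtop)))
  have hsep : ∀ i k, i < k → P (A ((D + 1) * i) ∩ A ((D + 1) * k)) ≤ ((N : ℝ≥0∞) * N)⁻¹ := by
    intro i k hik
    refine (hAT _ _ (by gcongr)).trans (hD _ ?_).le
    rw [← Nat.mul_sub]
    nlinarith [Nat.sub_pos_of_lt hik]
  have := natCast_mul_le_measure_univ_add P (fun i => hA _) (fun i => ha _) hsep N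
  rw [ENNReal.mul_inv_cancel hN0 hNtop] at this
  exact absurd this (not_le.mpr hNa)

end Events

/-- Proposition 2.6 (5): for a type-II dt-ss-si process, the law of `X 1` has no atom
except possibly at zero. -/
theorem stmt11 {Ω : Type*} [MeasurableSpace Ω] (P : Measure Ω) [IsProbabilityMeasure P]
    (X : ℕ → Ω → ℝ) (hXmeas : ∀ n, Measurable (X n))
    (p : ℕ) (hp : p.Prime) (H : ℝ) (hH : 0 < H)
    (hss : SelfSimilar P X (fun n => (padicNormNat p n) ^ H))
    (hsi : StationaryIncrements P X) :
    ∀ x : ℝ, x ≠ 0 → P {ω | X 1 ω = x} = 0 := by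
  have : Fact p.Prime := ⟨hp⟩
  intro x hx
  set c : ℝ := (p : ℝ)⁻¹ ^ H
  have hc0 : 0 < c := by
    have : (0 : ℝ) < p := by exact_mod_cast hp.pos
    positivity
  have hc1 : c < 1 :=
    Real.rpow_lt_one (by positivity) (inv_lt_one_of_one_lt₀ (by exact_mod_cast hp.one_lt)) hH
  refine eq_zero_of_measure_inter_le_of_tendsto P
    (A := fun j => {ω | X (p ^ j) ω = c ^ j * x}) (fun j => hXmeas _ (measurableSet_singleton _))
    (fun j => ?_)
    (tendsto_measure_eq_of_injective (P := P) ((hXmeas 1).sub (hXmeas 0))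
      (c := fun d => (c ^ d - 1) * x) ?_) ?_
  · have hbj := padicNormNat_prime_pow_rpow (p := p) j H
    rw [← hbj, hss.measure_eq_mul hXmeas (Nat.one_le_pow _ _ hp.pos) (hbj ▸ (pow_pos hc0 j).ne')]
  · intro d e hde
    exact pow_right_injective₀ hc0 hc1.ne (by simpa [hx] using hde)
  · intro j k hjk
    obtain ⟨e, he, rfl⟩ : ∃ e, e ≠ 0 ∧ k = j + e := ⟨k - j, by omega, by omega⟩
    simpa only [Nat.add_sub_cancel_left, Pi.sub_apply]
      using measure_inter_le_of_padicNormNat hss hsi hXmeas j he x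
end
end
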